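/- arXiv:1712.02484 — 2 statements merged into one kernel-verified Lean document; each statement's English description precedes it below -/
import Mathlib

section
/- Let G be a group with finite symmetric generating set S (e ∉ S) such that κ(a) = 0 for all a ∈ S. Then G is virtually abelian; more precisely, the center Z(G) has finite index in G. -/
/-!
A generator `b ≠ 1` has length `1`, so `κ(b) = 0` says that the conjugates `a⁻¹ b a`, `a ∈ S`,
have average length `1`. None of them is trivial, so each has length exactly `1`, i.e. lies in
`S`. Thus `S` is closed under conjugation by `S`, hence by all of `G`, so every generator has
finitely many conjugates and its centralizer has finite index. The centre is the intersection of
these finitely many centralizers.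
-/

open Filter Topology

section WL
variable {G : Type*} [Group G]

/-- Word length of `g` with respect to a generating set `S`. -/
noncomputable def wl (S : Set G) (g : G) : ℕ :=
  sInf {n | ∃ l : List G, (∀ x ∈ l, x ∈ S) ∧ l.length = n ∧ l.prod = g}

/-- Average word length of conjugates of `g` by elements of `S`. -/
noncomputable def Av (S : Finset G) (g : G) : ℝ :=
  (∑ a ∈ S, (wl (S : Set G) (a⁻¹ * g * a) : ℝ)) / S.card

/-- Medium-scale Ricci curvature `κ(g) = (|g| - Av(g))/|g|`. -/
noncomputable def curv (S : Finset G) (g : G) : ℝ :=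
  ((wl (S : Set G) g : ℝ) - Av S g) / (wl (S : Set G) g)

end WL

section WordLength

variable {G : Type*} [Group G] {S : Set G}

theorem wl_le_length {l : List G} (hl : ∀ x ∈ l, x ∈ S) : wl S l.prod ≤ l.length :=
  Nat.sInf_le ⟨l, hl, rfl, rfl⟩

theorem exists_length_eq_wl {g : G} (hg : g ∈ Submonoid.closure S) :
    ∃ l : List G, (∀ x ∈ l, x ∈ S) ∧ l.length = wl S g ∧ l.prod = g := by
  obtain ⟨l, hl, hprod⟩ := Submonoid.exists_list_of_mem_closure hg
  exact Nat.sInf_mem (s := {n | ∃ l : List G, (∀ x ∈ l, x ∈ S) ∧ l.length = n ∧ l.prod = g})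
    ⟨l.length, l, hl, rfl, hprod⟩

theorem wl_pos {g : G} (hg : g ∈ Submonoid.closure S) (hg1 : g ≠ 1) : 0 < wl S g := by
  obtain ⟨l, -, hlen, hprod⟩ := exists_length_eq_wl hg
  rw [← hlen, List.length_pos_iff]
  rintro rfl
  exact hg1 hprod.symm

theorem mem_of_wl_eq_one {g : G} (hg : g ∈ Submonoid.closure S) (h : wl S g = 1) : g ∈ S := by
  obtain ⟨l, hl, hlen, rfl⟩ := exists_length_eq_wl hg
  obtain ⟨x, rfl⟩ := List.length_eq_one_iff.mp (hlen.trans h)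
  simpa using hl x

theorem wl_eq_one_of_mem {a : G} (ha : a ∈ S) (ha1 : a ≠ 1) : wl S a = 1 := by
  have hle : wl S [a].prod ≤ 1 := wl_le_length (by simpa using ha)
  have hpos := wl_pos (Submonoid.subset_closure ha) ha1
  rw [List.prod_singleton] at hle
  omega

end WordLength

section Curvature

variable {G : Type*} [Group G] {S : Finset G}

theorem Av_eq_one_of_curv_eq_zero {b : G} (hb : wl (S : Set G) b = 1) (h : curv S b = 0) :
    Av S b = 1 := by
  rw [curv, hb] at h
  push_cast at h
  linarith

theorem wl_conj_eq_one_of_Av_eq_one (hS : Submonoid.closure (S : Set G) = ⊤) {a b : G}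
    (hb1 : b ≠ 1) (hAv : Av S b = 1) (ha : a ∈ S) : wl (S : Set G) (a⁻¹ * b * a) = 1 := by
  have hcard : (S.card : ℝ) ≠ 0 := by exact_mod_cast (Finset.card_ne_zero_of_mem ha)
  have hsum : ∑ x ∈ S, wl (S : Set G) (x⁻¹ * b * x) = ∑ _x ∈ S, 1 := by
    rw [Av, div_eq_one_iff_eq hcard] at hAv
    rw [← Finset.card_eq_sum_ones]
    exact_mod_cast hAv
  have hge : ∀ x ∈ S, 1 ≤ wl (S : Set G) (x⁻¹ * b * x) := fun x _ =>
    wl_pos (hS ▸ Submonoid.mem_top _) (by simpa using mt (conj_eq_one_iff (a := x⁻¹)).mp hb1)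
  exact ((Finset.sum_eq_sum_iff_of_le hge).mp hsum.symm a ha).symm

theorem conj_mem_of_curv_eq_zero (hS : Submonoid.closure (S : Set G) = ⊤) {a b : G}
    (hb : b ∈ S) (h : curv S b = 0) (ha : a ∈ S) : a⁻¹ * b * a ∈ S := by
  rcases eq_or_ne b 1 with rfl | hb1
  · simpa using hb
  have hAv := Av_eq_one_of_curv_eq_zero (wl_eq_one_of_mem (Finset.mem_coe.mpr hb) hb1) h
  exact mem_of_wl_eq_one (hS ▸ Submonoid.mem_top _) (wl_conj_eq_one_of_Av_eq_one hS hb1 hAv ha)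

end Curvature

section Conjugation

variable {G : Type*} [Group G] {S : Set G}

theorem submonoid_closure_eq_top_of_inv_mem (hgen : Subgroup.closure S = ⊤)
    (hsym : ∀ a ∈ S, a⁻¹ ∈ S) : Submonoid.closure S = ⊤ := by
  have hS : S ∪ S⁻¹ = S := Set.union_eq_self_of_subset_right fun x hx => by
    simpa using hsym _ hx
  rw [← hS, ← Subgroup.closure_toSubmonoid, hgen, Subgroup.top_toSubmonoid]

theorem conj_mem_of_closure_eq_top (hgen : Subgroup.closure S = ⊤) (hsym : ∀ a ∈ S, a⁻¹ ∈ S)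
    (hconj : ∀ a ∈ S, ∀ b ∈ S, a⁻¹ * b * a ∈ S) (g : G) {b : G} (hb : b ∈ S) :
    g * b * g⁻¹ ∈ S := by
  have hg : g ∈ Subgroup.closure S := hgen ▸ Subgroup.mem_top g
  induction hg using Subgroup.closure_induction'' generalizing b with
  | mem a ha => simpa using hconj a⁻¹ (hsym a ha) b hb
  | inv_mem a ha => simpa using hconj a ha b hb
  | one => simpa using hb
  | mul x y _ _ hx hy => simpa [mul_assoc] using hx (hy hb)

theorem Subgroup.finiteIndex_centralizer_singleton_of_conj_mem {a : G} (hS : S.Finite)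
    (h : ∀ g : G, g * a * g⁻¹ ∈ S) : (Subgroup.centralizer {a}).FiniteIndex := by
  have horbit : MulAction.orbit (ConjAct G) a ⊆ S := by
    rintro _ ⟨g, rfl⟩
    simpa [ConjAct.smul_def] using h (ConjAct.ofConjAct g)
  rw [Subgroup.finiteIndex_iff, Subgroup.centralizer_eq_comap_stabilizer]
  refine (Subgroup.index_comap_of_surjective _ ConjAct.toConjAct.surjective).trans_ne ?_
  rw [MulAction.index_stabilizer]
  exact (Set.ncard_pos (hS.subset horbit)).mpr ⟨a, MulAction.mem_orbit_self a⟩ |>.ne'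

theorem Subgroup.finiteIndex_center_of_conj_mem (S : Finset G)
    (hgen : Subgroup.closure (S : Set G) = ⊤) (h : ∀ g : G, ∀ a ∈ S, g * a * g⁻¹ ∈ S) :
    (Subgroup.center G).FiniteIndex := by
  rw [Subgroup.center_eq_iInf hgen]
  exact Subgroup.finiteIndex_iInf' _ fun a ha =>
    finiteIndex_centralizer_singleton_of_conj_mem S.finite_toSet fun g => h g a ha

end Conjugation

theorem stmt11_general {G : Type*} [Group G] (S : Finset G)
    (hgen : Subgroup.closure (S : Set G) = ⊤)
    (hsym : ∀ a ∈ S, a⁻¹ ∈ S)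
    (hcurv : ∀ a ∈ S, curv S a = 0) :
    (Subgroup.center G).FiniteIndex := by
  have hS := submonoid_closure_eq_top_of_inv_mem hgen hsym
  have hconj : ∀ a ∈ S, ∀ b ∈ S, a⁻¹ * b * a ∈ S := fun a ha b hb =>
    conj_mem_of_curv_eq_zero hS hb (hcurv b hb) ha
  exact Subgroup.finiteIndex_center_of_conj_mem S hgen
    (conj_mem_of_closure_eq_top hgen hsym hconj)

theorem stmt11 {G : Type*} [Group G] (S : Finset G)
    (hgen : Subgroup.closure (S : Set G) = ⊤)
    (hsym : ∀ a ∈ S, a⁻¹ ∈ S) (hid : (1 : G) ∉ S)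
    (hcurv : ∀ a ∈ S, curv S a = 0) :
    (Subgroup.center G).FiniteIndex :=
  stmt11_general S hgen hsym hcurv
end

section
/- Let G be a group with finite symmetric generating set S such that κ(g) > 0 for all g outside the ball of radius R. Then G is finite. (Key quantitative step: setting c_n = ∑_{(g,s) ∈ S_n × S} (|g| - |s⁻¹gs|), one has c_n = n|S|·∑_{g∈S_n} κ(g), so c_n > 0 for n > R, and the sequence k_n = ∑_{(g,s): g ∈ A_n, s⁻¹gs ∈ A_{n-1}} (|g|-|s⁻¹gs|), where A_n = S_{2n} ∪ S_{2n+1}, satisfies k_{n+1} < k_n for n ≫ R while |S_{2n}| ≤ k_n ≤ 2|S|·|A_n|, contradicting |S_{2n}| → ∞.) -/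
open Filter Topology

open Pointwise

section Basics
variable {G : Type*} [Group G] {S : Finset G}

lemma wl_le {g : G} {l : List G} (hl : ∀ x ∈ l, x ∈ (S : Set G)) (hp : l.prod = g) :
    wl (S : Set G) g ≤ l.length :=
  Nat.sInf_le ⟨l, hl, rfl, hp⟩

variable (hgen : Subgroup.closure (S : Set G) = ⊤) (hsym : ∀ a ∈ S, a⁻¹ ∈ S)
include hgen hsym

lemma wl_spec (g : G) :
    ∃ l : List G, (∀ x ∈ l, x ∈ (S : Set G)) ∧ l.length = wl (S : Set G) g ∧ l.prod = g := by
  have hmem : g ∈ Submonoid.closure ((S : Set G) ∪ (S : Set G)⁻¹) := by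
    rw [← Subgroup.closure_toSubmonoid, hgen]; trivial
  obtain ⟨l, hl, hp⟩ := Submonoid.exists_list_of_mem_closure hmem
  have hl' : ∀ x ∈ l, x ∈ (S : Set G) := by
    intro x hx
    rcases hl x hx with h | h
    · exact h
    · simpa using hsym _ (Set.mem_inv.mp h)
  have hne : {n | ∃ l : List G, (∀ x ∈ l, x ∈ (S : Set G)) ∧ l.length = n ∧ l.prod = g}.Nonempty :=
    ⟨l.length, l, hl', rfl, hp⟩
  exact Nat.sInf_mem hne

omit hgen hsym in
lemma wl_one : wl (S : Set G) (1 : G) = 0 :=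
  Nat.le_zero.mp (wl_le (l := []) (by simp) (by simp))

lemma wl_mul_le (g h : G) :
    wl (S : Set G) (g * h) ≤ wl (S : Set G) g + wl (S : Set G) h := by
  obtain ⟨l1, h1, hl1, hp1⟩ := wl_spec hgen hsym g
  obtain ⟨l2, h2, hl2, hp2⟩ := wl_spec hgen hsym h
  calc wl (S : Set G) (g * h) ≤ (l1 ++ l2).length := by
        refine wl_le ?_ (by simp [hp1, hp2])
        intro x hx; rcases List.mem_append.mp hx with h | h
        exacts [h1 x h, h2 x h]
    _ = _ := by simp [hl1, hl2]

omit hgen hsym in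
lemma wl_mem_le {s : G} (hs : s ∈ S) : wl (S : Set G) s ≤ 1 :=
  wl_le (l := [s]) (by simpa using hs) (by simp)

lemma wl_conj_le (g : G) {s : G} (hs : s ∈ S) :
    wl (S : Set G) (s⁻¹ * g * s) ≤ wl (S : Set G) g + 2 := by
  have h1 : wl (S : Set G) (s⁻¹ * g * s) ≤ wl (S : Set G) (s⁻¹ * g) + wl (S : Set G) s :=
    wl_mul_le hgen hsym _ _
  have h2 : wl (S : Set G) (s⁻¹ * g) ≤ wl (S : Set G) s⁻¹ + wl (S : Set G) g :=
    wl_mul_le hgen hsym _ _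
  have h3 := wl_mem_le hs
  have h4 := wl_mem_le (hsym s hs)
  omega

lemma wl_conj_ge (g : G) {s : G} (hs : s ∈ S) :
    wl (S : Set G) g ≤ wl (S : Set G) (s⁻¹ * g * s) + 2 := by
  have := wl_conj_le hgen hsym (s⁻¹ * g * s) (hsym s hs)
  simpa [mul_assoc] using this

end Basics
open Pointwise

section Basics
variable {G : Type*} [Group G] [DecidableEq G] {S : Finset G}

/-- Ball Finsets. -/
def Ball (S : Finset G) : ℕ → Finset G
  | 0 => {1}
  | n + 1 => Ball S n ∪ S * Ball S n

lemma prod_mem_Ball {l : List G} (hl : ∀ x ∈ l, x ∈ (S : Set G)) :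
    l.prod ∈ Ball S l.length := by
  induction l with
  | nil => simp [Ball]
  | cons a t ih =>
      have ha : a ∈ S := hl a (by simp)
      have ht := ih (fun x hx => hl x (by simp [hx]))
      simp only [List.prod_cons, List.length_cons, Ball]
      exact Finset.mem_union_right _ (Finset.mul_mem_mul ha ht)

lemma Ball_mono : ∀ n, Ball S n ⊆ Ball S (n + 1) := fun n => Finset.subset_union_left

lemma Ball_mono' {m n : ℕ} (h : m ≤ n) : Ball S m ⊆ Ball S n := by
  induction n with
  | zero => simpa [Nat.le_zero.mp h]
  | succ k ih =>
      rcases Nat.lt_or_ge m (k+1) with h' | h'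
      · exact (ih (by omega)).trans (Ball_mono k)
      · have : m = k + 1 := by omega
        simp [this]

lemma mem_Ball_of_wl (hgen : Subgroup.closure (S : Set G) = ⊤) (hsym : ∀ a ∈ S, a⁻¹ ∈ S)
    {g : G} {n : ℕ} (h : wl (S : Set G) g ≤ n) : g ∈ Ball S n := by
  obtain ⟨l, hl, hlen, hp⟩ := wl_spec hgen hsym g
  exact Ball_mono' (hlen ▸ h) (hp ▸ prod_mem_Ball hl)

lemma exists_wl_eq (hgen : Subgroup.closure (S : Set G) = ⊤)
    (hsym : ∀ a ∈ S, a⁻¹ ∈ S) :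
    ∀ m : ℕ, ∀ g : G, wl (S : Set G) g = m → ∀ n ≤ m, ∃ h : G, wl (S : Set G) h = n := by
  intro m
  induction m with
  | zero => intro g hg n hn; exact ⟨g, by omega⟩
  | succ k ih =>
      intro g hg n hn
      rcases eq_or_lt_of_le hn with rfl | h'
      · exact ⟨g, hg⟩
      · obtain ⟨l, hl, hlen, hp⟩ := wl_spec hgen hsym g
        cases l with
        | nil => rw [hg] at hlen; simp at hlen
        | cons a t =>
            have htS : ∀ x ∈ t, x ∈ (S : Set G) := fun x hx => hl x (by simp [hx])
            have h1 : wl (S : Set G) t.prod ≤ t.length := wl_le htS rfl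
            have hlen' : t.length = k := by rw [hg] at hlen; simpa using hlen
            have h2 : wl (S : Set G) g ≤ wl (S : Set G) a + wl (S : Set G) t.prod := by
              rw [← hp]; simpa using wl_mul_le hgen hsym a t.prod
            have ha : wl (S : Set G) a ≤ 1 := wl_mem_le (hl a (by simp))
            exact ih t.prod (by omega) n (by omega)

end Basics
section Core
variable {G : Type*} [Group G] [DecidableEq G]

/-- Sphere of radius `n` as a Finset. -/
noncomputable def Sph (S : Finset G) (n : ℕ) : Finset G :=
  (Ball S n).filter (fun g => wl (S : Set G) g = n)

/-- `A n = S_{2n} ∪ S_{2n+1}`. -/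
noncomputable def Aset (S : Finset G) (n : ℕ) : Finset G := Sph S (2*n) ∪ Sph S (2*n+1)

/-- `f (g,s) = |g| - |s⁻¹ g s|`. -/
noncomputable def fdiff (S : Finset G) (p : G × G) : ℤ :=
  (wl (S : Set G) p.1 : ℤ) - (wl (S : Set G) (p.2⁻¹ * p.1 * p.2) : ℤ)

/-- Flow from `A (n+1)` down to `A n`. -/
noncomputable def Kseq (S : Finset G) (n : ℕ) : ℤ :=
  ∑ p ∈ (Aset S (n+1)) ×ˢ S,
    if p.2⁻¹ * p.1 * p.2 ∈ Aset S n then fdiff S p else 0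

variable {S : Finset G}

lemma conj_invol (p : G × G) :
    ((p.2⁻¹)⁻¹ * (p.2⁻¹ * p.1 * p.2) * p.2⁻¹, (p.2⁻¹)⁻¹) = p := by
  simp [mul_assoc]

lemma fdiff_flip (p : G × G) :
    fdiff S (p.2⁻¹ * p.1 * p.2, p.2⁻¹) = - fdiff S p := by
  unfold fdiff
  rw [show ((p.2⁻¹ * p.1 * p.2, p.2⁻¹) : G × G).2⁻¹ * (p.2⁻¹ * p.1 * p.2, p.2⁻¹).1 *
    (p.2⁻¹ * p.1 * p.2, p.2⁻¹).2 = p.1 from by simp; group]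
  ring

variable (hgen : Subgroup.closure (S : Set G) = ⊤) (hsym : ∀ a ∈ S, a⁻¹ ∈ S)
include hgen hsym

lemma mem_Aset_iff {g : G} {n : ℕ} :
    g ∈ Aset S n ↔ (wl (S : Set G) g = 2*n ∨ wl (S : Set G) g = 2*n+1) := by
  constructor
  · intro h
    rcases Finset.mem_union.mp h with h | h
    · exact Or.inl (Finset.mem_filter.mp h).2
    · exact Or.inr (Finset.mem_filter.mp h).2
  · intro h
    rcases h with h | h
    · exact Finset.mem_union_left _ (Finset.mem_filter.mpr
        ⟨mem_Ball_of_wl hgen hsym h.le, h⟩)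
    · exact Finset.mem_union_right _ (Finset.mem_filter.mpr
        ⟨mem_Ball_of_wl hgen hsym h.le, h⟩)

lemma Kseq_nonneg (n : ℕ) : 0 ≤ Kseq S n := by
  refine Finset.sum_nonneg fun p hp => ?_
  split_ifs with h
  · have h1 := (mem_Aset_iff hgen hsym).mp (Finset.mem_product.mp hp).1
    have h2 := (mem_Aset_iff hgen hsym).mp h
    unfold fdiff; omega
  · exact le_refl _

omit hgen in
lemma flip_mem_filter {n m : ℕ} {p : G × G}
    (hp : p ∈ ((Aset S n) ×ˢ S).filter (fun p => p.2⁻¹ * p.1 * p.2 ∈ Aset S m)) :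
    (p.2⁻¹ * p.1 * p.2, p.2⁻¹) ∈
      ((Aset S m) ×ˢ S).filter (fun p => p.2⁻¹ * p.1 * p.2 ∈ Aset S n) := by
  have hp' := Finset.mem_filter.mp hp
  have hmem := Finset.mem_product.mp hp'.1
  refine Finset.mem_filter.mpr ⟨Finset.mem_product.mpr ⟨hp'.2, hsym _ hmem.2⟩, ?_⟩
  show p.2⁻¹⁻¹ * (p.2⁻¹ * p.1 * p.2) * p.2⁻¹ ∈ Aset S n
  rw [show p.2⁻¹⁻¹ * (p.2⁻¹ * p.1 * p.2) * p.2⁻¹ = p.1 from by group]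
  exact hmem.1

omit hgen in
lemma mid_sum_zero (n : ℕ) :
    ∑ p ∈ ((Aset S n) ×ˢ S).filter (fun p => p.2⁻¹ * p.1 * p.2 ∈ Aset S n),
      fdiff S p = 0 := by
  refine Finset.sum_involution (fun p _ => (p.2⁻¹ * p.1 * p.2, p.2⁻¹)) ?_ ?_ ?_ ?_
  · intro p hp
    rw [fdiff_flip]; ring
  · intro p hp hne heq
    apply hne
    have h1 : p.2⁻¹ * p.1 * p.2 = p.1 := congrArg Prod.fst heq
    unfold fdiff
    rw [h1]; ring
  · intro p hp
    exact flip_mem_filter hsym hp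
  · intro p hp
    exact conj_invol p

omit hgen in
lemma up_sum_eq (n : ℕ) :
    ∑ p ∈ ((Aset S (n+1)) ×ˢ S).filter (fun p => p.2⁻¹ * p.1 * p.2 ∈ Aset S (n+2)),
      fdiff S p
    = - ∑ p ∈ ((Aset S (n+2)) ×ˢ S).filter (fun p => p.2⁻¹ * p.1 * p.2 ∈ Aset S (n+1)),
      fdiff S p := by
  rw [← Finset.sum_neg_distrib]
  refine Finset.sum_nbij' (fun p => (p.2⁻¹ * p.1 * p.2, p.2⁻¹))
    (fun p => (p.2⁻¹ * p.1 * p.2, p.2⁻¹)) ?_ ?_ ?_ ?_ ?_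
  · intro p hp; exact flip_mem_filter hsym hp
  · intro p hp; exact flip_mem_filter hsym hp
  · intro p hp; exact conj_invol p
  · intro p hp; exact conj_invol p
  · intro p hp
    rw [fdiff_flip]; ring

end Core
section Core2
variable {G : Type*} [Group G] [DecidableEq G] {S : Finset G}
variable (hgen : Subgroup.closure (S : Set G) = ⊤) (hsym : ∀ a ∈ S, a⁻¹ ∈ S)
include hgen hsym

lemma sum_split (n : ℕ) :
    ∑ p ∈ (Aset S (n+1)) ×ˢ S, fdiff S p = Kseq S n - Kseq S (n+1) := by
  have key : ∀ p ∈ (Aset S (n+1)) ×ˢ S, fdiff S p =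
      (if p.2⁻¹ * p.1 * p.2 ∈ Aset S n then fdiff S p else 0)
      + (if p.2⁻¹ * p.1 * p.2 ∈ Aset S (n+1) then fdiff S p else 0)
      + (if p.2⁻¹ * p.1 * p.2 ∈ Aset S (n+2) then fdiff S p else 0) := by
    intro p hp
    obtain ⟨hp1, hp2⟩ := Finset.mem_product.mp hp
    have hw := (mem_Aset_iff hgen hsym).mp hp1
    have hle := wl_conj_le hgen hsym p.1 hp2
    have hge := wl_conj_ge hgen hsym p.1 hp2
    have e0 := mem_Aset_iff hgen hsym (g := p.2⁻¹ * p.1 * p.2) (n := n)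
    have e1 := mem_Aset_iff hgen hsym (g := p.2⁻¹ * p.1 * p.2) (n := n+1)
    have e2 := mem_Aset_iff hgen hsym (g := p.2⁻¹ * p.1 * p.2) (n := n+2)
    by_cases h0 : p.2⁻¹ * p.1 * p.2 ∈ Aset S n <;>
      by_cases h1 : p.2⁻¹ * p.1 * p.2 ∈ Aset S (n+1) <;>
      by_cases h2 : p.2⁻¹ * p.1 * p.2 ∈ Aset S (n+2) <;>
      first
        | (exfalso; rw [e0] at h0; rw [e1] at h1; rw [e2] at h2; omega)
        | simp [h0, h1, h2]
  rw [Finset.sum_congr rfl key]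
  rw [Finset.sum_add_distrib, Finset.sum_add_distrib]
  have hmid : ∑ p ∈ (Aset S (n+1)) ×ˢ S,
      (if p.2⁻¹ * p.1 * p.2 ∈ Aset S (n+1) then fdiff S p else 0) = 0 := by
    rw [← Finset.sum_filter]
    exact mid_sum_zero hsym (n+1)
  have hup : ∑ p ∈ (Aset S (n+1)) ×ˢ S,
      (if p.2⁻¹ * p.1 * p.2 ∈ Aset S (n+2) then fdiff S p else 0) = - Kseq S (n+1) := by
    rw [← Finset.sum_filter, up_sum_eq hsym n]
    congr 1
    rw [Finset.sum_filter]
    rfl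
  rw [hmid, hup]
  show Kseq S n + 0 + - Kseq S (n+1) = _
  ring

lemma csum_pos (hS : S.Nonempty) (R : ℕ)
    (hR : ∀ g : G, R < wl (S : Set G) g → 0 < curv S g)
    (n : ℕ) (hn : R < 2*(n+1)) (hA : (Aset S (n+1)).Nonempty) :
    0 < ∑ p ∈ (Aset S (n+1)) ×ˢ S, fdiff S p := by
  rw [Finset.sum_product]
  refine Finset.sum_pos (fun g hg => ?_) hA
  have hw := (mem_Aset_iff hgen hsym).mp hg
  have hwR : R < wl (S : Set G) g := by omega
  have hcurv := hR g hwR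
  have hw0 : (0:ℝ) < (wl (S : Set G) g : ℝ) := by
    have : 0 < wl (S : Set G) g := by omega
    exact_mod_cast this
  have hnum : 0 < (wl (S : Set G) g : ℝ) - Av S g := by
    rcases div_pos_iff.mp hcurv with ⟨h, _⟩ | ⟨_, h⟩
    · exact h
    · linarith
  have hcard : (0:ℝ) < (S.card : ℝ) := by
    exact_mod_cast Finset.card_pos.mpr hS
  have hAv : (∑ a ∈ S, (wl (S : Set G) (a⁻¹ * g * a) : ℝ)) <
      (S.card : ℝ) * (wl (S : Set G) g : ℝ) := by
    have h1 : Av S g < (wl (S : Set G) g : ℝ) := by linarith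
    rw [Av, div_lt_iff₀ hcard] at h1
    linarith
  have hreal : (0:ℝ) < ((∑ s ∈ S, fdiff S (g, s) : ℤ) : ℝ) := by
    push_cast [fdiff]
    rw [Finset.sum_sub_distrib, Finset.sum_const, nsmul_eq_mul]
    linarith
  exact_mod_cast hreal

end Core2


theorem stmt19 {G : Type*} [Group G] (S : Finset G)
    (hgen : Subgroup.closure (S : Set G) = ⊤)
    (hsym : ∀ a ∈ S, a⁻¹ ∈ S) (hid : (1 : G) ∉ S)
    (R : ℕ) (hR : ∀ g : G, R < wl (S : Set G) g → 0 < curv S g) :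
    Finite G := by
  classical
  rcases S.eq_empty_or_nonempty with rfl | hS
  · have hbot : (⊥ : Subgroup G) = ⊤ := by simpa using hgen
    have hall : ∀ g : G, g = 1 := fun g => by
      have hg : g ∈ (⊥ : Subgroup G) := hbot ▸ Subgroup.mem_top g
      simpa [Subgroup.mem_bot] using hg
    haveI : Subsingleton G := ⟨fun a b => by rw [hall a, hall b]⟩
    exact Finite.of_subsingleton
  · by_contra hfin
    rw [not_finite_iff_infinite] at hfin
    have hA : ∀ m : ℕ, (Aset S m).Nonempty := by
      intro m
      have hex : ∃ g : G, g ∉ Ball S (2*m) := by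
        by_contra h; push_neg at h
        haveI : Finite G := Finite.of_injective
          (fun g : G => (⟨g, h g⟩ : {x // x ∈ Ball S (2*m)}))
          (fun a b hab => congrArg Subtype.val hab)
        exact not_finite G
      obtain ⟨g, hg⟩ := hex
      have hwl : 2*m ≤ wl (S : Set G) g := by
        by_contra h; push_neg at h
        exact hg (mem_Ball_of_wl hgen hsym (by omega))
      obtain ⟨h, hh⟩ := exists_wl_eq hgen hsym (wl (S : Set G) g) g rfl (2*m) hwl
      exact ⟨h, (mem_Aset_iff hgen hsym).mpr (Or.inl hh)⟩
    have hdec : ∀ n, R ≤ n → Kseq S (n+1) < Kseq S n := by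
      intro n hn
      have hpos := csum_pos hgen hsym hS R hR n (by omega) (hA (n+1))
      have hsp := sum_split hgen hsym n
      linarith
    have hK : ∀ j : ℕ, Kseq S (R + j) + (j : ℤ) ≤ Kseq S R := by
      intro j; induction j with
      | zero => simp
      | succ i ih =>
          have h1 : Kseq S ((R + i) + 1) < Kseq S (R + i) := hdec (R + i) (by omega)
          have h2 : R + (i + 1) = (R + i) + 1 := by omega
          rw [h2]
          push_cast
          push_cast at ih
          linarith
    have h1 := hK ((Kseq S R).toNat + 1)
    have h2 := Kseq_nonneg hgen hsym (R + ((Kseq S R).toNat + 1))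
    have h3 : (0:ℤ) ≤ Kseq S R := Kseq_nonneg hgen hsym R
    omega
end
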